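/- For p > 1, every isometric embedding of W_p([0,1]) into itself is surjective, and the only isometric embeddings are the identity and the push-forward r_# of the reflection r(x) = 1−x; hence Isom(W_p([0,1])) ≅ C₂. -/

import Mathlib

open MeasureTheory Set

noncomputable section

def cdfI (μ : Measure ℝ) (x : ℝ) : ℝ := (μ (Set.Icc 0 x)).toReal

def quantI (μ : Measure ℝ) (t : ℝ) : ℝ := sSup {x : ℝ | cdfI μ x ≤ t}

def P01 : Set (Measure ℝ) := {μ | IsProbabilityMeasure μ ∧ μ (Set.Icc 0 1) = 1}

def dWpI (p : ℝ) (μ ν : Measure ℝ) : ℝ :=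
  (∫ t in (0:ℝ)..1, |quantI μ t - quantI ν t| ^ p) ^ (1 / p)

/-!
Write `q_η` for the quantile function of `η`, so that `W_p(μ, ν)^p = ∫₀¹ |q_μ - q_ν|^p`, and
`ν_s = s δ₀ + (1 - s) δ₁` (`twoPoint s`), whose quantile function is `0` on `(0, s)` and `1` on
`(s, 1)`.

Since `|a - b|^p ≤ 1` on `[0, 1]` with equality only for `{a, b} = {0, 1}`, and quantile functions
are monotone, `{δ₀, δ₁}` is the only pair at distance `1`, so an isometric embedding `φ` fixes or
swaps it. As `q_{r_# μ}(t) = 1 - q_μ(1 - t)`, `r_#` is an isometry, and composing with it we may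
assume that `φ` fixes `δ₀` and `δ₁`. For `p > 1` and `0 < r < 1`, `r^p + (1 - r)^p < 1`; hence
`W_p^p(η, δ₀) + W_p^p(η, δ₁) = 1` forces `q_η ∈ {0, 1}`, that is `η = ν_s`, and `φ` fixes every
`ν_s`. Finally `W_p^p(η, ν_s) - W_p^p(η, δ₁) = ∫₀ˢ (q_η^p - (1 - q_η)^p)` has a strictly
increasing function of `q_η` as integrand, so by Lebesgue differentiation the distances to the
`ν_s` determine `q_η` almost everywhere; and `q_η` determines `η`, the push-forward of Lebesgue
measure on `(0, 1)` under `q_η`. Thus `φ η = η`.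
-/

open Filter Topology ProbabilityTheory

local notation "𝕃" => volume.restrict (Ioo (0:ℝ) 1)

variable {μ ν η : Measure ℝ} {p r s t x : ℝ}

section Analysis

theorem rpow_add_one_sub_rpow_le_one (hp : 1 ≤ p) (hr : r ∈ Icc 0 1) :
    r ^ p + (1 - r) ^ p ≤ 1 := by
  have h₁ := Real.rpow_le_self_of_le_one hr.1 hr.2 hp
  have h₂ := Real.rpow_le_self_of_le_one (sub_nonneg.2 hr.2) (by linarith [hr.1]) hp
  linarith

theorem eq_zero_or_eq_one_of_rpow_add_one_sub_rpow_eq_one (hp : 1 < p) (hr : r ∈ Icc 0 1)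
    (h : r ^ p + (1 - r) ^ p = 1) : r = 0 ∨ r = 1 := by
  by_contra! hne
  have h0 : 0 < r := hr.1.lt_of_ne hne.1.symm
  have h1 : r < 1 := hr.2.lt_of_ne hne.2
  have h₁ := Real.rpow_lt_self_of_lt_one h0 h1 hp
  have h₂ := Real.rpow_lt_self_of_lt_one (sub_pos.2 h1) (by linarith) hp
  linarith

theorem strictMonoOn_rpow_sub_one_sub_rpow (hp : 0 < p) :
    StrictMonoOn (fun r : ℝ => r ^ p - (1 - r) ^ p) (Icc 0 1) := by
  intro a ha b hb hab
  have h₁ := Real.rpow_lt_rpow ha.1 hab hp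
  have h₂ := Real.rpow_le_rpow (sub_nonneg.2 hb.2) (by linarith : 1 - b ≤ 1 - a) hp.le
  dsimp only
  linarith

theorem abs_sub_le_one_of_mem_Icc {a b : ℝ} (ha : a ∈ Icc 0 1) (hb : b ∈ Icc 0 1) :
    |a - b| ≤ 1 :=
  abs_sub_le_iff.2 ⟨by linarith [ha.2, hb.1], by linarith [ha.1, hb.2]⟩

theorem eq_zero_one_of_abs_sub_rpow_eq_one {a b : ℝ} (hp : 0 < p) (ha : a ∈ Icc 0 1)
    (hb : b ∈ Icc 0 1) (h : |a - b| ^ p = 1) : (a = 0 ∧ b = 1) ∨ (a = 1 ∧ b = 0) := by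
  have heq : |a - b| = 1 := le_antisymm (abs_sub_le_one_of_mem_Icc ha hb)
    (not_lt.1 fun hlt => (Real.rpow_lt_one (abs_nonneg _) hlt hp).ne h)
  rcases (abs_eq zero_le_one).1 heq with h' | h'
  · exact Or.inr ⟨by linarith [ha.2, hb.1], by linarith [ha.2, hb.1]⟩
  · exact Or.inl ⟨by linarith [ha.1, hb.2], by linarith [ha.1, hb.2]⟩

theorem intervalIntegral_congr_ae_Ioo {f g : ℝ → ℝ} (h : f =ᵐ[𝕃] g) :
    ∫ t in (0:ℝ)..1, f t = ∫ t in (0:ℝ)..1, g t :=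
  intervalIntegral.integral_congr_ae_restrict <| by
    rwa [uIoc_of_le zero_le_one, ← Measure.restrict_congr_set Ioo_ae_eq_Ioc]

theorem ae_eq_one_of_intervalIntegral_eq_one {g : ℝ → ℝ} (hg : IntervalIntegrable g volume 0 1)
    (hle : ∀ t ∈ Ioo (0:ℝ) 1, g t ≤ 1) (h : ∫ t in (0:ℝ)..1, g t = 1) :
    ∀ᵐ t ∂𝕃, g t = 1 := by
  rw [intervalIntegrable_iff_integrableOn_Ioo_of_le zero_le_one] at hg
  rw [intervalIntegral.integral_of_le zero_le_one, integral_Ioc_eq_integral_Ioo] at h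
  refine (integral_eq_iff_of_ae_le hg (integrable_const 1)
    (ae_restrict_of_forall_mem measurableSet_Ioo hle)).1 ?_
  simpa using h

theorem ae_eq_zero_of_forall_intervalIntegral_eq_zero {f : ℝ → ℝ} {a b : ℝ}
    (hf : IntervalIntegrable f volume a b) (h : ∀ s ∈ Icc a b, ∫ t in a..s, f t = 0) :
    ∀ᵐ t ∂volume.restrict (Ioo a b), f t = 0 := by
  rw [ae_restrict_iff' measurableSet_Ioo]
  filter_upwards [hf.ae_hasDerivAt_integral] with t ht htab
  have hderiv := ht (Icc_subset_uIcc (Ioo_subset_Icc_self htab)) a left_mem_uIcc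
  have hzero : (fun x => ∫ u in a..x, f u) =ᶠ[𝓝 t] fun _ => 0 :=
    eventually_of_mem (Ioo_mem_nhds htab.1 htab.2) fun x hx => h x (Ioo_subset_Icc_self hx)
  exact hderiv.unique ((hasDerivAt_const t 0).congr_of_eventuallyEq hzero)

end Analysis

section P01

theorem measure_compl_Icc_zero_one (hμ : μ ∈ P01) : μ (Icc 0 1)ᶜ = 0 :=
  have := hμ.1
  (prob_compl_eq_zero_iff measurableSet_Icc).2 hμ.2

theorem measure_Iic_eq_measure_Icc (hμ : μ ∈ P01) (x : ℝ) : μ (Iic x) = μ (Icc 0 x) := by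
  refine le_antisymm ?_ (measure_mono Icc_subset_Iic_self)
  calc μ (Iic x) ≤ μ (Icc 0 x ∪ (Icc 0 1)ᶜ) :=
        measure_mono fun y (hy : y ≤ x) => by
          by_cases hy0 : 0 ≤ y
          · exact Or.inl ⟨hy0, hy⟩
          · exact Or.inr fun h => hy0 h.1
    _ ≤ μ (Icc 0 x) := (measure_union_le _ _).trans (by simp [measure_compl_Icc_zero_one hμ])

theorem cdfI_eq_cdf (hμ : μ ∈ P01) : cdfI μ = cdf μ := by
  have := hμ.1
  ext x
  rw [cdfI, cdf_eq_real, measureReal_def, measure_Iic_eq_measure_Icc hμ]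

theorem ofReal_cdfI (hμ : μ ∈ P01) (x : ℝ) : ENNReal.ofReal (cdfI μ x) = μ (Iic x) := by
  have := hμ.1
  rw [cdfI_eq_cdf hμ, ofReal_cdf]

theorem cdfI_le_one (hμ : μ ∈ P01) (x : ℝ) : cdfI μ x ≤ 1 := by
  have := hμ.1
  rw [cdfI_eq_cdf hμ]
  exact cdf_le_one μ x

theorem cdfI_of_neg (μ : Measure ℝ) (hx : x < 0) : cdfI μ x = 0 := by
  simp [cdfI, Icc_eq_empty_of_lt hx]

theorem cdfI_of_one_le (hμ : μ ∈ P01) (hx : 1 ≤ x) : cdfI μ x = 1 := by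
  have := hμ.1
  have : μ (Icc 0 x) = 1 :=
    le_antisymm prob_le_one (hμ.2 ▸ measure_mono (Icc_subset_Icc_right hx))
  simp [cdfI, this]

end P01

/-- The two inequalities that every generalized inverse of `F` on `(0,1)` satisfies, whether it
is the left- or the right-continuous one. -/
def IsQuantile (F g : ℝ → ℝ) : Prop :=
  ∀ x, ∀ t ∈ Ioo (0:ℝ) 1, (t < F x → g t ≤ x) ∧ (g t ≤ x → t ≤ F x)

section IsQuantile

variable {F g h : ℝ → ℝ}

theorem IsQuantile.monotoneOn (hg : IsQuantile F g) : MonotoneOn g (Ioo 0 1) := by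
  intro s hs t ht hst
  rcases hst.eq_or_lt with rfl | hlt
  · exact le_rfl
  · exact (hg _ s hs).1 (hlt.trans_le ((hg _ t ht).2 le_rfl))

theorem IsQuantile.ae_eq (hg : IsQuantile F g) (hh : IsQuantile F h) : g =ᵐ[𝕃] h := by
  -- between `g t` and `h t` lies a rational `r`, and then `t = F r`
  have hsub : {t | t ∈ Ioo (0:ℝ) 1 ∧ g t ≠ h t} ⊆ range fun r : ℚ => F r := by
    rintro t ⟨ht, hne⟩
    wlog hlt : g t < h t generalizing g h
    · exact this hh hg hne.symm ((Ne.symm hne).lt_of_le (not_lt.1 hlt))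
    obtain ⟨r, hgr, hrh⟩ := exists_rat_btwn hlt
    refine ⟨r, le_antisymm ?_ ((hg r t ht).2 hgr.le)⟩
    by_contra hr
    exact hrh.not_ge ((hh r t ht).1 (not_le.1 hr))
  rw [EventuallyEq, ae_restrict_iff' measurableSet_Ioo, ae_iff]
  refine measure_mono_null (fun t ht => hsub ?_) ((countable_range _).measure_zero volume)
  simpa only [mem_ofPred_eq, Classical.not_imp] using ht

theorem IsQuantile.volume_preimage_Iic (hg : IsQuantile F g) (h1 : F x ≤ 1) :
    𝕃 (g ⁻¹' Iic x) = ENNReal.ofReal (F x) := by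
  rw [Measure.restrict_apply' measurableSet_Ioo]
  refine le_antisymm ?_ ?_
  · calc volume (g ⁻¹' Iic x ∩ Ioo 0 1) ≤ volume (Ioc 0 (F x)) :=
          measure_mono fun t ⟨hgt, ht⟩ => ⟨ht.1, (hg x t ht).2 hgt⟩
      _ = ENNReal.ofReal (F x) := by rw [Real.volume_Ioc, sub_zero]
  · calc ENNReal.ofReal (F x) = volume (Ioo 0 (F x)) := by rw [Real.volume_Ioo, sub_zero]
      _ ≤ volume (g ⁻¹' Iic x ∩ Ioo 0 1) := measure_mono fun t ht =>
          have ht' : t ∈ Ioo (0:ℝ) 1 := ⟨ht.1, ht.2.trans_le h1⟩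
          ⟨(hg x t ht').1 ht.2, ht'⟩

theorem isQuantile_of_volume_preimage_Iic (hg : MonotoneOn g (Ioo 0 1))
    (hF : ∀ x, 𝕃 (g ⁻¹' Iic x) = ENNReal.ofReal (F x)) : IsQuantile F g := by
  intro x t ht
  simp_rw [Measure.restrict_apply' measurableSet_Ioo] at hF
  constructor
  · intro htF
    by_contra hgt
    have hsub : g ⁻¹' Iic x ∩ Ioo 0 1 ⊆ Ioo 0 t := fun s ⟨hgs, hs⟩ =>
      ⟨hs.1, not_le.1 fun hts => hgt ((hg ht hs hts).trans hgs)⟩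
    have := (hF x).symm.trans_le (measure_mono hsub)
    rw [Real.volume_Ioo, sub_zero, ENNReal.ofReal_le_ofReal_iff ht.1.le] at this
    linarith
  · intro hgt
    have hsub : Ioc 0 t ⊆ g ⁻¹' Iic x ∩ Ioo 0 1 := fun s hs =>
      have hs' : s ∈ Ioo (0:ℝ) 1 := ⟨hs.1, hs.2.trans_lt ht.2⟩
      ⟨(hg hs' ht hs.2).trans hgt, hs'⟩
    have := (measure_mono hsub).trans_eq (hF x)
    rw [Real.volume_Ioc, sub_zero, ENNReal.ofReal_le_ofReal_iff'] at this
    exact this.resolve_right ht.1.not_ge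

end IsQuantile

section Quantile

theorem isQuantile_quantI (hμ : μ ∈ P01) : IsQuantile (cdfI μ) (quantI μ) := by
  intro x t ht
  have hne : {y | cdfI μ y ≤ t}.Nonempty := ⟨-1, by simp [cdfI_of_neg μ, ht.1.le]⟩
  have hbdd : BddAbove {y | cdfI μ y ≤ t} := ⟨1, fun y hy => not_lt.1 fun h1 =>
    ht.2.not_ge (cdfI_of_one_le hμ h1.le ▸ hy)⟩
  have hmono : Monotone (cdfI μ) := cdfI_eq_cdf hμ ▸ monotone_cdf μ
  constructor
  · exact fun htx => csSup_le hne fun y hy =>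
      not_lt.1 fun hxy => (hmono hxy.le).not_gt (hy.trans_lt htx)
  · intro hqx
    by_contra! hxt
    have hcont : Tendsto (cdfI μ) (𝓝[>] x) (𝓝 (cdfI μ x)) :=
      cdfI_eq_cdf hμ ▸ ((cdf μ).right_continuous x).mono Ioi_subset_Ici_self
    obtain ⟨y, hy, hxy⟩ := ((hcont.eventually (gt_mem_nhds hxt)).and self_mem_nhdsWithin).exists
    exact (not_le.2 hxy) ((le_csSup hbdd hy.le).trans hqx)

theorem quantI_mem_Icc (hμ : μ ∈ P01) (ht : t ∈ Ioo 0 1) : quantI μ t ∈ Icc 0 1 := by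
  refine ⟨not_lt.1 fun hneg => ?_, (isQuantile_quantI hμ 1 t ht).1 ?_⟩
  · have := (isQuantile_quantI hμ _ t ht).2 le_rfl
    rw [cdfI_of_neg μ hneg] at this
    exact ht.1.not_ge this
  · rw [cdfI_of_one_le hμ le_rfl]
    exact ht.2

theorem aemeasurable_quantI (hμ : μ ∈ P01) : AEMeasurable (quantI μ) 𝕃 :=
  aemeasurable_restrict_of_monotoneOn measurableSet_Ioo (isQuantile_quantI hμ).monotoneOn

theorem map_quantI (hμ : μ ∈ P01) : Measure.map (quantI μ) 𝕃 = μ := by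
  have := hμ.1
  refine Measure.ext_of_Iic _ _ fun x => ?_
  rw [Measure.map_apply_of_aemeasurable (aemeasurable_quantI hμ) measurableSet_Iic,
    (isQuantile_quantI hμ).volume_preimage_Iic (cdfI_le_one hμ x), ofReal_cdfI hμ]

theorem eq_of_quantI_ae_eq (hμ : μ ∈ P01) (hν : ν ∈ P01) (h : quantI μ =ᵐ[𝕃] quantI ν) :
    μ = ν := by
  rw [← map_quantI hμ, ← map_quantI hν, Measure.map_congr h]

theorem quantI_ae_eq_of_map_eq {g : ℝ → ℝ} (hμ : μ ∈ P01) (hg : MonotoneOn g (Ioo 0 1))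
    (hgm : AEMeasurable g 𝕃) (hmap : Measure.map g 𝕃 = μ) : quantI μ =ᵐ[𝕃] g := by
  refine (isQuantile_quantI hμ).ae_eq (isQuantile_of_volume_preimage_Iic hg fun x => ?_)
  rw [← Measure.map_apply_of_aemeasurable hgm measurableSet_Iic, hmap, ofReal_cdfI hμ]

theorem integral_comp_quantI (hμ : μ ∈ P01) {f : ℝ → ℝ} (hf : Continuous f) :
    ∫ t in (0:ℝ)..1, f (quantI μ t) = ∫ x, f x ∂μ := by
  rw [intervalIntegral.integral_of_le zero_le_one, integral_Ioc_eq_integral_Ioo,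
    ← integral_map (aemeasurable_quantI hμ) hf.aestronglyMeasurable, map_quantI hμ]

theorem intervalIntegrable_comp_quantI (hμ : μ ∈ P01) (hν : ν ∈ P01) {G : ℝ × ℝ → ℝ}
    (hG : Continuous G) {a b : ℝ} (ha : a ∈ Icc 0 1) (hb : b ∈ Icc 0 1) :
    IntervalIntegrable (fun t => G (quantI μ t, quantI ν t)) volume a b := by
  obtain ⟨C, hC⟩ := (isCompact_Icc.prod isCompact_Icc).exists_bound_of_continuousOn
    (s := Icc (0:ℝ) 1 ×ˢ Icc (0:ℝ) 1) hG.continuousOn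
  have hint : IntegrableOn (fun t => G (quantI μ t, quantI ν t)) (Ioo 0 1) := by
    refine Integrable.of_bound (hG.measurable.comp_aemeasurable
      ((aemeasurable_quantI hμ).prodMk (aemeasurable_quantI hν))).aestronglyMeasurable C ?_
    filter_upwards [ae_restrict_mem measurableSet_Ioo] with t ht
    exact hC _ ⟨quantI_mem_Icc hμ ht, quantI_mem_Icc hν ht⟩
  rw [← uIcc_of_le zero_le_one] at ha hb
  exact ((intervalIntegrable_iff_integrableOn_Ioo_of_le zero_le_one).2 hint).mono_set
    (uIcc_subset_uIcc ha hb)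

theorem intervalIntegrable_quantI_rpow (hp : 0 ≤ p) (hμ : μ ∈ P01) {a b : ℝ}
    (ha : a ∈ Icc 0 1) (hb : b ∈ Icc 0 1) :
    IntervalIntegrable (fun t => quantI μ t ^ p) volume a b :=
  intervalIntegrable_comp_quantI hμ hμ (continuous_fst.rpow_const fun _ => Or.inr hp) ha hb

theorem intervalIntegrable_one_sub_quantI_rpow (hp : 0 ≤ p) (hμ : μ ∈ P01) {a b : ℝ}
    (ha : a ∈ Icc 0 1) (hb : b ∈ Icc 0 1) :
    IntervalIntegrable (fun t => (1 - quantI μ t) ^ p) volume a b :=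
  intervalIntegrable_comp_quantI hμ hμ
    ((continuous_const.sub continuous_fst).rpow_const fun _ => Or.inr hp) ha hb

end Quantile

section Reflection

theorem measurable_one_sub : Measurable fun x : ℝ => 1 - x := measurable_const.sub measurable_id

theorem map_one_sub_mem (hμ : μ ∈ P01) : μ.map (fun x => 1 - x) ∈ P01 := by
  have := hμ.1
  refine ⟨Measure.isProbabilityMeasure_map measurable_one_sub.aemeasurable, ?_⟩
  rw [Measure.map_apply measurable_one_sub measurableSet_Icc, preimage_const_sub_Icc, sub_zero,
    sub_self, hμ.2]

theorem map_one_sub_map_one_sub (μ : Measure ℝ) :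
    (μ.map fun x => 1 - x).map (fun x => 1 - x) = μ := by
  rw [Measure.map_map measurable_one_sub measurable_one_sub]
  simp

theorem map_one_sub_restrict_Ioo : Measure.map (fun t => 1 - t) 𝕃 = 𝕃 := by
  have h := (Measure.measurePreserving_sub_left volume (1:ℝ)).restrict_preimage
    (measurableSet_Ioo (a := (0:ℝ)) (b := 1))
  rw [preimage_const_sub_Ioo, sub_zero, sub_self] at h
  exact h.map_eq

theorem quantI_map_one_sub_ae_eq (hμ : μ ∈ P01) :
    quantI (μ.map fun x => 1 - x) =ᵐ[𝕃] fun t => 1 - quantI μ (1 - t) := by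
  have hq : AEMeasurable (quantI μ) (Measure.map (fun t => 1 - t) 𝕃) :=
    map_one_sub_restrict_Ioo.symm ▸ aemeasurable_quantI hμ
  refine quantI_ae_eq_of_map_eq (map_one_sub_mem hμ) ?_
    (aemeasurable_const.sub (hq.comp_measurable measurable_one_sub)) ?_
  · intro s hs t ht hst
    have hmem : ∀ u ∈ Ioo (0:ℝ) 1, 1 - u ∈ Ioo (0:ℝ) 1 := fun u hu =>
      ⟨by linarith [hu.2], by linarith [hu.1]⟩
    have := (isQuantile_quantI hμ).monotoneOn (hmem t ht) (hmem s hs) (by linarith)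
    linarith
  · calc Measure.map (fun t => 1 - quantI μ (1 - t)) 𝕃
          = ((Measure.map (fun t => 1 - t) 𝕃).map (quantI μ)).map fun x => 1 - x := by
            rw [AEMeasurable.map_map_of_aemeasurable measurable_one_sub.aemeasurable hq,
              AEMeasurable.map_map_of_aemeasurable (measurable_one_sub.comp_aemeasurable hq)
                measurable_one_sub.aemeasurable]
            rfl
      _ = μ.map fun x => 1 - x := by rw [map_one_sub_restrict_Ioo, map_quantI hμ]

end Reflection

section Cost

def costI (p : ℝ) (μ ν : Measure ℝ) : ℝ := ∫ t in (0:ℝ)..1, |quantI μ t - quantI ν t| ^ p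

theorem dWpI_rpow (hp : 0 < p) (μ ν : Measure ℝ) : dWpI p μ ν ^ p = costI p μ ν := by
  have hnn : 0 ≤ costI p μ ν :=
    intervalIntegral.integral_nonneg zero_le_one fun t _ => by positivity
  rw [dWpI, ← costI, ← Real.rpow_mul hnn, one_div_mul_cancel hp.ne', Real.rpow_one]

theorem costI_map_one_sub (hμ : μ ∈ P01) (hν : ν ∈ P01) :
    costI p (μ.map fun x => 1 - x) (ν.map fun x => 1 - x) = costI p μ ν := by
  calc costI p (μ.map fun x => 1 - x) (ν.map fun x => 1 - x)
      = ∫ t in (0:ℝ)..1, (fun u => |quantI μ u - quantI ν u| ^ p) (1 - t) := by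
        refine intervalIntegral_congr_ae_Ioo ?_
        filter_upwards [quantI_map_one_sub_ae_eq hμ, quantI_map_one_sub_ae_eq hν] with t hμt hνt
        rw [hμt, hνt, sub_sub_sub_cancel_left, abs_sub_comm]
    _ = costI p μ ν := by
      rw [intervalIntegral.integral_comp_sub_left (fun u => |quantI μ u - quantI ν u| ^ p),
        sub_self, sub_zero, costI]

end Cost

section TwoPoint

def twoPoint (s : ℝ) : Measure ℝ :=
  ENNReal.ofReal s • Measure.dirac 0 + ENNReal.ofReal (1 - s) • Measure.dirac 1

theorem twoPoint_apply (s : ℝ) {A : Set ℝ} (hA : MeasurableSet A) :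
    twoPoint s A =
      ENNReal.ofReal s * A.indicator 1 0 + ENNReal.ofReal (1 - s) * A.indicator 1 1 := by
  simp [twoPoint, Measure.dirac_apply' _ hA]

theorem twoPoint_mem (hs : s ∈ Icc 0 1) : twoPoint s ∈ P01 := by
  have hsum : ENNReal.ofReal s + ENNReal.ofReal (1 - s) = 1 := by
    rw [← ENNReal.ofReal_add hs.1 (by linarith [hs.2])]
    simp
  refine ⟨⟨?_⟩, ?_⟩
  · simpa [twoPoint_apply s MeasurableSet.univ] using hsum
  · simpa [twoPoint_apply s measurableSet_Icc] using hsum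

theorem cdfI_twoPoint (hs : s ∈ Icc 0 1) (hx : x ∈ Ico 0 1) : cdfI (twoPoint s) x = s := by
  rw [cdfI, twoPoint_apply s measurableSet_Icc,
    indicator_of_mem (show (0:ℝ) ∈ Icc 0 x from ⟨le_rfl, hx.1⟩),
    indicator_of_notMem (show (1:ℝ) ∉ Icc 0 x from fun h => hx.2.not_ge h.2)]
  simp [hs.1]

theorem quantI_twoPoint_of_lt (hs : s ∈ Icc 0 1) (ht : 0 < t) (hts : t < s) :
    quantI (twoPoint s) t = 0 := by
  have ht' : t ∈ Ioo (0:ℝ) 1 := ⟨ht, hts.trans_le hs.2⟩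
  refine le_antisymm ((isQuantile_quantI (twoPoint_mem hs) 0 t ht').1 ?_)
    (quantI_mem_Icc (twoPoint_mem hs) ht').1
  rwa [cdfI_twoPoint hs ⟨le_rfl, zero_lt_one⟩]

theorem quantI_twoPoint_of_gt (hs : s ∈ Icc 0 1) (hst : s < t) (ht : t < 1) :
    quantI (twoPoint s) t = 1 := by
  have ht' : t ∈ Ioo (0:ℝ) 1 := ⟨hs.1.trans_lt hst, ht⟩
  obtain ⟨hq0, hq1⟩ := quantI_mem_Icc (twoPoint_mem hs) ht'
  refine le_antisymm hq1 (not_lt.1 fun hq => ?_)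
  have := (isQuantile_quantI (twoPoint_mem hs) _ t ht').2 le_rfl
  rw [cdfI_twoPoint hs ⟨hq0, hq⟩] at this
  exact hst.not_ge this

theorem eq_twoPoint_one_of_ae (hμ : μ ∈ P01) (h : ∀ᵐ t ∂𝕃, quantI μ t = 0) :
    μ = twoPoint 1 := by
  refine eq_of_quantI_ae_eq hμ (twoPoint_mem unitInterval.one_mem) ?_
  filter_upwards [h, ae_restrict_mem measurableSet_Ioo] with t ht ht01
  rw [ht, quantI_twoPoint_of_lt unitInterval.one_mem ht01.1 ht01.2]

theorem eq_twoPoint_zero_of_ae (hμ : μ ∈ P01) (h : ∀ᵐ t ∂𝕃, quantI μ t = 1) :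
    μ = twoPoint 0 := by
  refine eq_of_quantI_ae_eq hμ (twoPoint_mem unitInterval.zero_mem) ?_
  filter_upwards [h, ae_restrict_mem measurableSet_Ioo] with t ht ht01
  rw [ht, quantI_twoPoint_of_gt unitInterval.zero_mem ht01.1 ht01.2]

theorem eq_twoPoint_of_ae_quantI_mem (hμ : μ ∈ P01)
    (h : ∀ᵐ t ∂𝕃, quantI μ t = 0 ∨ quantI μ t = 1) : μ = twoPoint (μ {0}).toReal := by
  have := hμ.1
  have hmeas : MeasurableSet ({0, 1} : Set ℝ) := (measurableSet_singleton 1).insert 0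
  have hconc : ∀ᵐ x ∂μ, x ∈ ({0, 1} : Set ℝ) := by
    rw [← map_quantI hμ]
    exact (ae_map_iff (p := (· ∈ ({0, 1} : Set ℝ))) (aemeasurable_quantI hμ) hmeas).2 h
  have hdisj : Disjoint ({0} : Set ℝ) {1} := disjoint_singleton.2 zero_ne_one
  have hsum : (μ {0}).toReal + (μ {1}).toReal = 1 := by
    rw [← ENNReal.toReal_add (measure_ne_top _ _) (measure_ne_top _ _),
      ← measure_union hdisj (measurableSet_singleton 1), singleton_union,
      (prob_compl_eq_zero_iff hmeas).1 (ae_iff.1 hconc), ENNReal.toReal_one]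
  calc μ = μ.restrict ({0} ∪ {1}) := by
        rw [singleton_union, Measure.restrict_eq_self_of_ae_mem hconc]
    _ = twoPoint (μ {0}).toReal := by
      rw [Measure.restrict_union hdisj (measurableSet_singleton 1), Measure.restrict_singleton,
        Measure.restrict_singleton, twoPoint, ← eq_sub_of_add_eq' hsum,
        ENNReal.ofReal_toReal (measure_ne_top _ _), ENNReal.ofReal_toReal (measure_ne_top _ _)]

theorem map_one_sub_twoPoint (s : ℝ) :
    (twoPoint s).map (fun x => 1 - x) = twoPoint (1 - s) := by
  simp only [twoPoint, Measure.map_add _ _ measurable_one_sub, Measure.map_smul,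
    Measure.map_dirac' measurable_one_sub, sub_zero, sub_self, sub_sub_cancel]
  exact add_comm _ _

theorem integral_twoPoint (hs : s ∈ Icc 0 1) (f : ℝ → ℝ) :
    ∫ x, f x ∂twoPoint s = s * f 0 + (1 - s) * f 1 := by
  rw [twoPoint, integral_add_measure, integral_smul_measure, integral_smul_measure, integral_dirac,
    integral_dirac, ENNReal.toReal_ofReal hs.1, ENNReal.toReal_ofReal (by linarith [hs.2]),
    smul_eq_mul, smul_eq_mul]
  all_goals exact (integrable_dirac (by simp)).smul_measure ENNReal.ofReal_ne_top

theorem costI_twoPoint (hp : 0 ≤ p) (hη : η ∈ P01) (hs : s ∈ Icc 0 1) :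
    costI p η (twoPoint s) =
      (∫ t in (0:ℝ)..s, quantI η t ^ p) + ∫ t in s..1, (1 - quantI η t) ^ p := by
  have hint : ∀ a ∈ Icc (0:ℝ) 1, ∀ b ∈ Icc (0:ℝ) 1,
      IntervalIntegrable (fun t => |quantI η t - quantI (twoPoint s) t| ^ p) volume a b :=
    fun a ha b hb => intervalIntegrable_comp_quantI hη (twoPoint_mem hs)
      ((continuous_fst.sub continuous_snd).abs.rpow_const fun _ => Or.inr hp) ha hb
  rw [costI, ← intervalIntegral.integral_add_adjacent_intervals
    (hint 0 unitInterval.zero_mem s hs) (hint s hs 1 unitInterval.one_mem)]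
  congr 1
  · refine intervalIntegral.integral_congr_Ioo_of_le hs.1 fun t ht => ?_
    rw [quantI_twoPoint_of_lt hs ht.1 ht.2, sub_zero,
      abs_of_nonneg (quantI_mem_Icc hη ⟨ht.1, ht.2.trans_le hs.2⟩).1]
  · refine intervalIntegral.integral_congr_Ioo_of_le hs.2 fun t ht => ?_
    rw [quantI_twoPoint_of_gt hs ht.1 ht.2, abs_sub_comm,
      abs_of_nonneg (sub_nonneg.2 (quantI_mem_Icc hη ⟨hs.1.trans_lt ht.1, ht.2⟩).2)]

theorem costI_twoPoint_one (hp : 0 ≤ p) (hη : η ∈ P01) :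
    costI p η (twoPoint 1) = ∫ t in (0:ℝ)..1, quantI η t ^ p := by
  rw [costI_twoPoint hp hη unitInterval.one_mem, intervalIntegral.integral_same, add_zero]

theorem costI_twoPoint_zero (hp : 0 ≤ p) (hη : η ∈ P01) :
    costI p η (twoPoint 0) = ∫ t in (0:ℝ)..1, (1 - quantI η t) ^ p := by
  rw [costI_twoPoint hp hη unitInterval.zero_mem, intervalIntegral.integral_same, zero_add]

theorem costI_twoPoint_twoPoint_one (hp : 0 < p) (hs : s ∈ Icc 0 1) :
    costI p (twoPoint s) (twoPoint 1) = 1 - s := by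
  rw [costI_twoPoint_one hp.le (twoPoint_mem hs),
    integral_comp_quantI (twoPoint_mem hs) (f := fun x => x ^ p)
      (continuous_id.rpow_const fun _ => Or.inr hp.le),
    integral_twoPoint hs]
  simp [hp.ne']

theorem costI_twoPoint_twoPoint_zero (hp : 0 < p) (hs : s ∈ Icc 0 1) :
    costI p (twoPoint s) (twoPoint 0) = s := by
  rw [costI_twoPoint_zero hp.le (twoPoint_mem hs),
    integral_comp_quantI (twoPoint_mem hs) (f := fun x => (1 - x) ^ p)
      ((continuous_const.sub continuous_id).rpow_const fun _ => Or.inr hp.le),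
    integral_twoPoint hs]
  simp [hp.ne']

theorem costI_twoPoint_sub_costI_twoPoint_zero (hp : 0 ≤ p) (hη : η ∈ P01) (hs : s ∈ Icc 0 1) :
    costI p η (twoPoint s) - costI p η (twoPoint 0) =
      ∫ t in (0:ℝ)..s, (quantI η t ^ p - (1 - quantI η t) ^ p) := by
  have h0 := unitInterval.zero_mem
  rw [costI_twoPoint hp hη hs, costI_twoPoint_zero hp hη,
    intervalIntegral.integral_sub (intervalIntegrable_quantI_rpow hp hη h0 hs)
      (intervalIntegrable_one_sub_quantI_rpow hp hη h0 hs),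
    ← intervalIntegral.integral_add_adjacent_intervals
      (intervalIntegrable_one_sub_quantI_rpow hp hη h0 hs)
      (intervalIntegrable_one_sub_quantI_rpow hp hη hs unitInterval.one_mem)]
  ring

end TwoPoint

section Characterizations

theorem twoPoint_one_zero_of_costI_eq_one (hp : 0 < p) (hμ : μ ∈ P01) (hν : ν ∈ P01)
    (h : costI p μ ν = 1) :
    (μ = twoPoint 1 ∧ ν = twoPoint 0) ∨ (μ = twoPoint 0 ∧ ν = twoPoint 1) := by
  have hint : IntervalIntegrable (fun t => |quantI μ t - quantI ν t| ^ p) volume 0 1 :=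
    intervalIntegrable_comp_quantI hμ hν
      ((continuous_fst.sub continuous_snd).abs.rpow_const fun _ => Or.inr hp.le)
      unitInterval.zero_mem unitInterval.one_mem
  have hends : ∀ᵐ t ∂𝕃,
      (quantI μ t = 0 ∧ quantI ν t = 1) ∨ (quantI μ t = 1 ∧ quantI ν t = 0) := by
    filter_upwards [ae_eq_one_of_intervalIntegral_eq_one hint (fun t ht => Real.rpow_le_one
      (abs_nonneg _) (abs_sub_le_one_of_mem_Icc (quantI_mem_Icc hμ ht) (quantI_mem_Icc hν ht))
      hp.le) h, ae_restrict_mem measurableSet_Ioo] with t ht ht01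
    exact eq_zero_one_of_abs_sub_rpow_eq_one hp (quantI_mem_Icc hμ ht01) (quantI_mem_Icc hν ht01) ht
  -- both quantile functions are monotone, so only one of the two alternatives can occur
  have hone : (∀ t ∈ Ioo (0:ℝ) 1, ¬(quantI μ t = 0 ∧ quantI ν t = 1)) ∨
      (∀ t ∈ Ioo (0:ℝ) 1, ¬(quantI μ t = 1 ∧ quantI ν t = 0)) := by
    by_contra! h
    obtain ⟨⟨t₀, ht₀, hμ₀, hν₀⟩, ⟨t₁, ht₁, hμ₁, hν₁⟩⟩ := h
    rcases le_total t₀ t₁ with h | h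
    · have := (isQuantile_quantI hν).monotoneOn ht₀ ht₁ h
      linarith
    · have := (isQuantile_quantI hμ).monotoneOn ht₁ ht₀ h
      linarith
  rcases hone with hno | hno
  · have h10 : ∀ᵐ t ∂𝕃, quantI μ t = 1 ∧ quantI ν t = 0 := by
      filter_upwards [hends, ae_restrict_mem measurableSet_Ioo] with t ht ht01
      exact ht.resolve_left (hno t ht01)
    exact Or.inr ⟨eq_twoPoint_zero_of_ae hμ (h10.mono fun _ => And.left),
      eq_twoPoint_one_of_ae hν (h10.mono fun _ => And.right)⟩
  · have h01 : ∀ᵐ t ∂𝕃, quantI μ t = 0 ∧ quantI ν t = 1 := by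
      filter_upwards [hends, ae_restrict_mem measurableSet_Ioo] with t ht ht01
      exact ht.resolve_right (hno t ht01)
    exact Or.inl ⟨eq_twoPoint_one_of_ae hμ (h01.mono fun _ => And.left),
      eq_twoPoint_zero_of_ae hν (h01.mono fun _ => And.right)⟩

theorem eq_twoPoint_of_costI_twoPoint (hp : 1 < p) (hη : η ∈ P01)
    (h1 : costI p η (twoPoint 1) = 1 - s) (h0 : costI p η (twoPoint 0) = s) : η = twoPoint s := by
  have hp0 : 0 ≤ p := by linarith
  have hi₁ := intervalIntegrable_quantI_rpow hp0 hη unitInterval.zero_mem unitInterval.one_mem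
  have hi₂ :=
    intervalIntegrable_one_sub_quantI_rpow hp0 hη unitInterval.zero_mem unitInterval.one_mem
  have hsum : ∫ t in (0:ℝ)..1, (quantI η t ^ p + (1 - quantI η t) ^ p) = 1 := by
    rw [intervalIntegral.integral_add hi₁ hi₂, ← costI_twoPoint_one hp0 hη,
      ← costI_twoPoint_zero hp0 hη, h1, h0, sub_add_cancel]
  have h01 : ∀ᵐ t ∂𝕃, quantI η t = 0 ∨ quantI η t = 1 := by
    filter_upwards [ae_eq_one_of_intervalIntegral_eq_one (hi₁.add hi₂)
      (fun t ht => rpow_add_one_sub_rpow_le_one hp.le (quantI_mem_Icc hη ht)) hsum,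
      ae_restrict_mem measurableSet_Ioo] with t ht ht01
    exact eq_zero_or_eq_one_of_rpow_add_one_sub_rpow_eq_one hp (quantI_mem_Icc hη ht01) ht
  have hc : (η {0}).toReal ∈ Icc (0:ℝ) 1 := by
    have := hη.1
    exact ⟨ENNReal.toReal_nonneg,
      ENNReal.toReal_le_of_le_ofReal zero_le_one (by simpa using prob_le_one)⟩
  have hη' := eq_twoPoint_of_ae_quantI_mem hη h01
  rw [hη', costI_twoPoint_twoPoint_zero (by linarith) hc] at h0
  rwa [← h0]

theorem eq_of_costI_twoPoint_eq (hp : 0 < p) (hμ : μ ∈ P01) (hν : ν ∈ P01)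
    (h : ∀ s ∈ Icc 0 1, costI p μ (twoPoint s) = costI p ν (twoPoint s)) : μ = ν := by
  have hint : ∀ η ∈ P01, ∀ s ∈ Icc (0:ℝ) 1,
      IntervalIntegrable (fun t => quantI η t ^ p - (1 - quantI η t) ^ p) volume 0 s :=
    fun η hη s hs => (intervalIntegrable_quantI_rpow hp.le hη unitInterval.zero_mem hs).sub
      (intervalIntegrable_one_sub_quantI_rpow hp.le hη unitInterval.zero_mem hs)
  have hae := ae_eq_zero_of_forall_intervalIntegral_eq_zero
    ((hint μ hμ 1 unitInterval.one_mem).sub (hint ν hν 1 unitInterval.one_mem)) fun s hs => by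
      rw [intervalIntegral.integral_sub (hint μ hμ s hs) (hint ν hν s hs),
        ← costI_twoPoint_sub_costI_twoPoint_zero hp.le hμ hs,
        ← costI_twoPoint_sub_costI_twoPoint_zero hp.le hν hs, h s hs, h 0 unitInterval.zero_mem,
        sub_self]
  refine eq_of_quantI_ae_eq hμ hν ?_
  filter_upwards [hae, ae_restrict_mem measurableSet_Ioo] with t ht ht01
  exact (strictMonoOn_rpow_sub_one_sub_rpow hp).injOn (quantI_mem_Icc hμ ht01)
    (quantI_mem_Icc hν ht01) (sub_eq_zero.1 ht)

theorem eq_self_of_fixes_twoPoint_zero_one (hp : 1 < p) {φ : Measure ℝ → Measure ℝ}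
    (hmaps : MapsTo φ P01 P01) (hcost : ∀ μ ∈ P01, ∀ ν ∈ P01, costI p (φ μ) (φ ν) = costI p μ ν)
    (h0 : φ (twoPoint 0) = twoPoint 0) (h1 : φ (twoPoint 1) = twoPoint 1) :
    ∀ μ ∈ P01, φ μ = μ := by
  have hp0 : 0 < p := by linarith
  have hseg : ∀ s ∈ Icc (0:ℝ) 1, φ (twoPoint s) = twoPoint s := fun s hs =>
    eq_twoPoint_of_costI_twoPoint hp (hmaps (twoPoint_mem hs))
      (by rw [← h1, hcost _ (twoPoint_mem hs) _ (twoPoint_mem unitInterval.one_mem),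
        costI_twoPoint_twoPoint_one hp0 hs])
      (by rw [← h0, hcost _ (twoPoint_mem hs) _ (twoPoint_mem unitInterval.zero_mem),
        costI_twoPoint_twoPoint_zero hp0 hs])
  intro μ hμ
  exact eq_of_costI_twoPoint_eq hp0 (hmaps hμ) hμ fun s hs => by
    rw [← hcost μ hμ _ (twoPoint_mem hs), hseg s hs]

theorem eq_map_one_sub_of_swaps_twoPoint_zero_one (hp : 1 < p) {φ : Measure ℝ → Measure ℝ}
    (hmaps : MapsTo φ P01 P01) (hcost : ∀ μ ∈ P01, ∀ ν ∈ P01, costI p (φ μ) (φ ν) = costI p μ ν)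
    (h0 : φ (twoPoint 0) = twoPoint 1) (h1 : φ (twoPoint 1) = twoPoint 0) :
    ∀ μ ∈ P01, φ μ = μ.map fun x => 1 - x := by
  have hid := eq_self_of_fixes_twoPoint_zero_one hp (φ := fun μ => (φ μ).map fun x => 1 - x)
    (fun μ hμ => map_one_sub_mem (hmaps hμ))
    (fun μ hμ ν hν => by rw [costI_map_one_sub (hmaps hμ) (hmaps hν), hcost μ hμ ν hν])
    (by rw [h0, map_one_sub_twoPoint, sub_self]) (by rw [h1, map_one_sub_twoPoint, sub_zero])
  exact fun μ hμ => (map_one_sub_map_one_sub (φ μ)).symm.trans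
    (congrArg (fun ν => ν.map fun x => 1 - x) (hid μ hμ))

end Characterizations

/-- For `p > 1`, every isometric embedding of `W_p([0,1])` into itself is surjective
and is either the identity or the push-forward of the reflection `r(x) = 1-x`;
hence `Isom(W_p([0,1])) ≅ C₂`. -/
theorem isemb_WpI_classification (p : ℝ) (hp : 1 < p) (φ : Measure ℝ → Measure ℝ)
    (hmaps : Set.MapsTo φ P01 P01)
    (hiso : ∀ μ ∈ P01, ∀ ν ∈ P01, dWpI p (φ μ) (φ ν) = dWpI p μ ν) :
    Set.SurjOn φ P01 P01 ∧
    ((∀ μ ∈ P01, φ μ = μ) ∨ (∀ μ ∈ P01, φ μ = Measure.map (fun x => 1 - x) μ)) := by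
  have hp0 : 0 < p := by linarith
  have h0 := twoPoint_mem unitInterval.zero_mem
  have h1 := twoPoint_mem unitInterval.one_mem
  have hcost : ∀ μ ∈ P01, ∀ ν ∈ P01, costI p (φ μ) (φ ν) = costI p μ ν := fun μ hμ ν hν => by
    rw [← dWpI_rpow hp0, ← dWpI_rpow hp0, hiso μ hμ ν hν]
  rcases twoPoint_one_zero_of_costI_eq_one hp0 (hmaps h1) (hmaps h0)
      (by rw [hcost _ h1 _ h0, costI_twoPoint_twoPoint_zero hp0 unitInterval.one_mem]) with
    ⟨hφ1, hφ0⟩ | ⟨hφ1, hφ0⟩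
  · have hid := eq_self_of_fixes_twoPoint_zero_one hp hmaps hcost hφ0 hφ1
    exact ⟨fun ν hν => ⟨ν, hν, hid ν hν⟩, Or.inl hid⟩
  · have hφ := eq_map_one_sub_of_swaps_twoPoint_zero_one hp hmaps hcost hφ0 hφ1
    exact ⟨fun ν hν => ⟨_, map_one_sub_mem hν,
      (hφ _ (map_one_sub_mem hν)).trans (map_one_sub_map_one_sub ν)⟩, Or.inr hφ⟩
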